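/- arXiv:math/0612596 — 3 statements merged into one kernel-verified Lean document; each statement's English description precedes it below -/
import Mathlib

section
/- Let C : ℝ → Matrix (Fin n) (Fin n) ℝ be a differentiable solution of the Riccati equation C' = C² defined on all of ℝ. Then C(0) has no nonzero real eigenvalue. -/
/-!
If `C 0 *ᵥ v = λ • v`, then `w t = (1 - λ t) • C t *ᵥ v - λ • v` solves the linear equation
`w' = C t *ᵥ w` and vanishes at `t = 0`, so by uniqueness for linear ODEs it vanishes identically.
But `w λ⁻¹ = -λ • v ≠ 0`.
-/

open Set Matrix

theorem linear_ODE_solution_eq_zero {E : Type*} [NormedAddCommGroup E] [NormedSpace ℝ E]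
    {A : ℝ → E →L[ℝ] E} (hA : Continuous A) {w : ℝ → E}
    (hw : ∀ t, HasDerivAt w (A t (w t)) t) {t₀ : ℝ} (h₀ : w t₀ = 0) (t : ℝ) : w t = 0 := by
  obtain ⟨a, b, ht, ht₀⟩ : ∃ a b, t ∈ Ioo a b ∧ t₀ ∈ Ioo a b :=
    ⟨min t t₀ - 1, max t t₀ + 1, by constructor <;> constructor <;> grind⟩
  obtain ⟨K, hK⟩ : BddAbove ((fun s => ‖A s‖₊) '' Icc a b) :=
    (isCompact_Icc.image (continuous_nnnorm.comp hA)).bddAbove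
  have hLip : ∀ s ∈ Ioo a b, LipschitzOnWith K (A s) univ := fun s hs =>
    ((A s).lipschitz.weaken (hK ⟨s, Ioo_subset_Icc_self hs, rfl⟩)).lipschitzOnWith
  exact ODE_solution_unique_of_mem_Ioo (g := fun _ => 0) hLip ht₀
    (fun s _ => ⟨hw s, trivial⟩) (fun s _ => ⟨by simpa using hasDerivAt_const s (0 : E), trivial⟩)
    h₀ ht

theorem hasDerivAt_mulVec_of_hasDerivAt_entries {m n : Type*} [Fintype n]
    {C : ℝ → Matrix m n ℝ} {C' : Matrix m n ℝ} {t : ℝ}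
    (hC : ∀ i j, HasDerivAt (fun s => C s i j) (C' i j) t) (v : n → ℝ) :
    HasDerivAt (fun s => C s *ᵥ v) (C' *ᵥ v) t :=
  hasDerivAt_pi.2 fun i => HasDerivAt.fun_sum fun j _ => (hC i j).mul_const (v j)

theorem Matrix.continuous_toContinuousLinearMap_toLin' {n : Type*} [Fintype n] [DecidableEq n] :
    Continuous fun M : Matrix n n ℝ => LinearMap.toContinuousLinearMap (toLin' M) :=
  (LinearMap.toContinuousLinearMap.toLinearMap.comp
    (toLin' : Matrix n n ℝ ≃ₗ[ℝ] _).toLinearMap).continuous_of_finiteDimensional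

/-- A globally defined differentiable solution of the matrix Riccati equation `C' = C²`
has no nonzero real eigenvalue at time `0`. -/
theorem stmt2 (n : ℕ) (C : ℝ → Matrix (Fin n) (Fin n) ℝ)
    (hC : ∀ t : ℝ, ∀ i j, HasDerivAt (fun s => C s i j) ((C t * C t) i j) t) :
    ∀ lam : ℝ, lam ≠ 0 → ∀ v : Fin n → ℝ, v ≠ 0 → (C 0).mulVec v ≠ lam • v := by
  intro lam hlam v hv hCv
  have hCcont : Continuous C := continuous_pi fun i => continuous_pi fun j =>
    continuous_iff_continuousAt.2 fun t => (hC t i j).continuousAt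
  set w : ℝ → Fin n → ℝ := fun t => (1 - lam * t) • C t *ᵥ v - lam • v
  have hw : ∀ t, HasDerivAt w (LinearMap.toContinuousLinearMap (toLin' (C t)) (w t)) t := by
    intro t
    have hline : HasDerivAt (fun s : ℝ => 1 - lam * s) (-lam) t := by
      simpa using ((hasDerivAt_id t).const_mul lam).const_sub 1
    refine ((hline.fun_smul (hasDerivAt_mulVec_of_hasDerivAt_entries (hC t) v)).sub_const
      (lam • v)).congr_deriv ?_
    simp only [w, LinearMap.coe_toContinuousLinearMap', toLin'_apply, mulVec_sub, mulVec_smul,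
      mulVec_mulVec]
    module
  have hw₀ : w 0 = 0 := by simp [w, hCv]
  have hw_inv := linear_ODE_solution_eq_zero
    (continuous_toContinuousLinearMap_toLin'.comp hCcont) hw hw₀ lam⁻¹
  simp [w, hlam, hv] at hw_inv
end

section
/- Let s : V × V → ℂ be a symmetric bilinear form on a complex vector space satisfying s(X,Y)·s(Z,W) = s(X,W)·s(Z,Y) for all X,Y,Z,W. If there exists X with s(X,X) ≠ 0, then the associated symmetric operator has rank exactly 1; interpreting s as ⟨S(·,·),η⟩ for a shape operator A_η that is trace-free and nonzero, the corresponding real symmetric operator A_η on the underlying 4-dimensional real space has rank 2. -/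
/-!
Fixing `X₀` with `c = s X₀ X₀ ≠ 0`, the quadratic identity gives `s X Y = s X X₀ · s X₀ Y / c`,
so every `s X` is a multiple of `s X₀` and `s` has rank one. The same formula shows that
`A X = 0` iff `s X X₀ = 0`: if `s X X₀ = 0` then `‖A X‖² = s X (A X) = 0`. Hence `A` has the same
real kernel as the nonzero complex functional `s · X₀`, whose real range is `ℂ ≅ ℝ²`.
-/

open LinearMap

section QuadraticIdentity

variable {K M N : Type*} [Field K] [AddCommGroup M] [Module K M] [AddCommGroup N] [Module K N]
  {s : M →ₗ[K] N →ₗ[K] K}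

theorem LinearMap.apply_eq_smul_of_mul_comm (hq : ∀ X Y Z W, s X Y * s Z W = s X W * s Z Y)
    {X₀ : M} {Y₀ : N} (h₀ : s X₀ Y₀ ≠ 0) (X : M) :
    s X = (s X Y₀ / s X₀ Y₀) • s X₀ := by
  ext Y
  rw [smul_apply, smul_eq_mul, div_mul_eq_mul_div, eq_div_iff h₀, hq X Y X₀ Y₀]

theorem LinearMap.range_eq_span_singleton_of_mul_comm
    (hq : ∀ X Y Z W, s X Y * s Z W = s X W * s Z Y)
    {X₀ : M} {Y₀ : N} (h₀ : s X₀ Y₀ ≠ 0) :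
    range s = K ∙ s X₀ := by
  refine le_antisymm ?_ (Submodule.span_le.mpr (Set.singleton_subset_iff.mpr ⟨X₀, rfl⟩))
  rintro _ ⟨X, rfl⟩
  rw [apply_eq_smul_of_mul_comm hq h₀ X]
  exact Submodule.smul_mem _ _ (Submodule.mem_span_singleton_self _)

theorem LinearMap.rank_eq_one_of_mul_comm (hq : ∀ X Y Z W, s X Y * s Z W = s X W * s Z Y)
    {X₀ : M} {Y₀ : N} (h₀ : s X₀ Y₀ ≠ 0) :
    rank s = 1 := by
  have hX₀ : s X₀ ≠ 0 := fun h ↦ h₀ (by rw [h, LinearMap.zero_apply])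
  rw [LinearMap.rank, range_eq_span_singleton_of_mul_comm hq h₀,
    Module.rank_eq_one_iff_finrank_eq_one]
  exact finrank_span_singleton hX₀

end QuadraticIdentity

theorem LinearMap.finrank_range_eq_of_ker_eq {R M N P : Type*} [Ring R] [AddCommGroup M]
    [Module R M] [AddCommGroup N] [Module R N] [AddCommGroup P] [Module R P]
    {f : M →ₗ[R] N} {g : M →ₗ[R] P} (h : ker f = ker g) :
    Module.finrank R (range f) = Module.finrank R (range g) :=
  (f.quotKerEquivRange.symm ≪≫ₗ Submodule.quotEquivOfEq _ _ h ≪≫ₗ g.quotKerEquivRange).finrank_eq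

theorem ker_eq_restrictScalars_ker_flip {V : Type*} [NormedAddCommGroup V] [InnerProductSpace ℂ V]
    {s : V →ₗ[ℂ] V →ₗ[ℂ] ℂ} (hq : ∀ X Y Z W, s X Y * s Z W = s X W * s Z Y)
    {X₀ : V} (h₀ : s X₀ X₀ ≠ 0) {A : V →ₗ[ℝ] V} (hs : ∀ X Y : V, s X Y = inner ℂ (A X) Y) :
    ker A = (ker (s.flip X₀)).restrictScalars ℝ := by
  ext Y
  simp only [mem_ker, Submodule.restrictScalars_mem, flip_apply]
  refine ⟨fun hY ↦ by rw [hs, hY, inner_zero_left], fun hY ↦ ?_⟩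
  have : s Y (A Y) = 0 := by
    rw [apply_eq_smul_of_mul_comm hq h₀ Y, hY, zero_div, zero_smul, LinearMap.zero_apply]
  rwa [hs, inner_self_eq_zero] at this

theorem stmt6_general (V : Type*) [NormedAddCommGroup V] [InnerProductSpace ℂ V]
    (s : V →ₗ[ℂ] V →ₗ[ℂ] ℂ)
    (hq : ∀ X Y Z W, s X Y * s Z W = s X W * s Z Y)
    (hX : ∃ X, s X X ≠ 0)
    (A : V →ₗ[ℝ] V)
    (hs : ∀ X Y : V, s X Y = (inner ℂ (A X) Y : ℂ)) :
    LinearMap.rank s = 1 ∧ Module.finrank ℝ (LinearMap.range A) = 2 := by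
  obtain ⟨X₀, h₀⟩ := hX
  have hφ : s.flip X₀ ≠ 0 := fun h ↦ h₀ (by rw [← flip_apply, h, LinearMap.zero_apply])
  refine ⟨rank_eq_one_of_mul_comm hq h₀, ?_⟩
  rw [finrank_range_eq_of_ker_eq (g := (s.flip X₀).restrictScalars ℝ)
    (ker_eq_restrictScalars_ker_flip hq h₀ hs), range_restrictScalars,
    Module.Dual.range_eq_top_of_ne_zero hφ, Submodule.restrictScalars_top, finrank_top,
    Complex.finrank_real_complex]

/-- Let `V` be the complex 2-dimensional `(1,0)`-space of a 4-real-dimensional Kähler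
vector space, and `s` a symmetric bilinear form on `V` (the `η`-component of the
`(2,0)`-part of the second fundamental form) satisfying the curvature identity
`s(X,Y)s(Z,W) = s(X,W)s(Z,Y)` and `s(X,X) ≠ 0` for some `X`. If `A` is the associated
real shape operator (a conjugate-linear real endomorphism with `s X Y = ⟨A X, Y⟩`),
trace-free and nonzero, then `s` has rank exactly one and `A` has (real) rank two. -/
theorem stmt6 (V : Type*) [NormedAddCommGroup V] [InnerProductSpace ℂ V]
    [FiniteDimensional ℂ V] (hdim : Module.finrank ℂ V = 2)
    (s : V →ₗ[ℂ] V →ₗ[ℂ] ℂ)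
    (hsymm : ∀ X Y, s X Y = s Y X)
    (hq : ∀ X Y Z W, s X Y * s Z W = s X W * s Z Y)
    (hX : ∃ X, s X X ≠ 0)
    (A : V →ₗ[ℝ] V)
    (hconj : ∀ (c : ℂ) (X : V), A (c • X) = (starRingEnd ℂ) c • A X)
    (hs : ∀ X Y : V, s X Y = (inner ℂ (A X) Y : ℂ))
    (htrace : LinearMap.trace ℝ V A = 0) (hA0 : A ≠ 0) :
    LinearMap.rank s = 1 ∧ Module.finrank ℝ (LinearMap.range A) = 2 :=
  stmt6_general V s hq hX A hs
end

section
/- Let Q̂ be a positive definite Hermitian matrix and B an r×r complex matrix such that B·Q̂ is symmetric when expressed in a basis where Q̂ is the identity (i.e., under the change of basis making Q̂ = I, B becomes complex symmetric). Then there exists a unitary matrix U such that conj(U) B U⁻¹ is diagonal with nonnegative real entries. -/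
/-!
Takagi factorization by deflation. For symmetric `A` the matrix `A Aᴴ = A Ā` is positive
semidefinite; if `A Ā w = σ² w` then `u = A w̄ + σ w` satisfies `A ū = σ u` (or, when `u = 0`,
`i w` does). Completing the normalized vector to a unitary `U`, the symmetric matrix
`Uᴴ A Ū` has `σ` as the only nonzero entry in its row and column, so the remaining block is
handled by induction on the size.
-/

open Matrix ComplexOrder

namespace Matrix

variable {ι κ : Type*}

def HasTakagiFactorization [Fintype ι] [DecidableEq ι] (A : Matrix ι ι ℂ) : Prop :=
  ∃ U ∈ unitaryGroup ι ℂ, ∃ d : ι → ℝ, 0 ≤ d ∧ A = U * diagonal (fun i => (d i : ℂ)) * Uᵀ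

section Takagi

variable [Fintype ι] [DecidableEq ι] [Fintype κ] [DecidableEq κ]

theorem hasTakagiFactorization_diagonal {d : ι → ℝ} (hd : 0 ≤ d) :
    (diagonal fun i => (d i : ℂ)).HasTakagiFactorization :=
  ⟨1, one_mem _, d, hd, by simp⟩

theorem HasTakagiFactorization.fromBlocks {A : Matrix ι ι ℂ} {B : Matrix κ κ ℂ}
    (hA : A.HasTakagiFactorization) (hB : B.HasTakagiFactorization) :
    (Matrix.fromBlocks A 0 0 B).HasTakagiFactorization := by
  obtain ⟨U, hU, d, hd, rfl⟩ := hA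
  obtain ⟨V, hV, e, he, rfl⟩ := hB
  refine ⟨Matrix.fromBlocks U 0 0 V, ?_, Sum.elim d e, fun i => ?_, ?_⟩
  · rw [mem_unitaryGroup_iff, star_eq_conjTranspose] at *
    simp [fromBlocks_conjTranspose, fromBlocks_multiply, hU, hV]
  · cases i with
    | inl i => exact hd i
    | inr i => exact he i
  · have hD : (diagonal fun i => ((Sum.elim d e i : ℝ) : ℂ)) =
        Matrix.fromBlocks (diagonal fun i => (d i : ℂ)) 0 0 (diagonal fun i => (e i : ℂ)) := by
      rw [fromBlocks_diagonal]
      congr with (i | i) <;> rfl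
    rw [hD, fromBlocks_transpose, fromBlocks_multiply, fromBlocks_multiply]
    simp

theorem HasTakagiFactorization.submatrix_equiv {A : Matrix ι ι ℂ}
    (h : A.HasTakagiFactorization) (e : κ ≃ ι) :
    (A.submatrix e e).HasTakagiFactorization := by
  obtain ⟨U, hU, d, hd, rfl⟩ := h
  refine ⟨U.submatrix e e, ?_, d ∘ e, fun i => hd (e i), ?_⟩
  · rw [mem_unitaryGroup_iff, star_eq_conjTranspose] at *
    rw [conjTranspose_submatrix, submatrix_mul_equiv, hU, submatrix_one_equiv]
  · rw [← submatrix_mul_equiv _ _ _ e, ← submatrix_mul_equiv _ _ _ e, submatrix_diagonal_equiv,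
      transpose_submatrix]
    rfl

end Takagi

theorem HasTakagiFactorization.mul_mul_transpose [Fintype ι] [DecidableEq ι]
    {A U : Matrix ι ι ℂ}
    (h : A.HasTakagiFactorization) (hU : U ∈ unitaryGroup ι ℂ) :
    (U * A * Uᵀ).HasTakagiFactorization := by
  obtain ⟨V, hV, d, hd, rfl⟩ := h
  exact ⟨U * V, mul_mem hU hV, d, hd, by simp only [transpose_mul, Matrix.mul_assoc]⟩

theorem IsSymm.mul_mul_transpose {α : Type*} [CommSemiring α] [Fintype ι] {A : Matrix ι ι α}
    (hA : A.IsSymm) (B : Matrix κ ι α) : (B * A * Bᵀ).IsSymm := by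
  rw [IsSymm, transpose_mul, transpose_mul, transpose_transpose, hA.eq, Matrix.mul_assoc]

theorem IsSymm.star_mulVec {α : Type*} [CommSemiring α] [StarRing α] [Fintype ι]
    {A : Matrix ι ι α} (hA : A.IsSymm) (x : ι → α) : star (A *ᵥ x) = Aᴴ *ᵥ star x := by
  rw [Matrix.star_mulVec, ← mulVec_transpose,
    ← conjTranspose_transpose_eq_transpose_conjTranspose, hA.eq]

theorem IsSymm.exists_mulVec_star_eq_smul [Fintype ι] [DecidableEq ι] [Nonempty ι]
    {A : Matrix ι ι ℂ} (hA : A.IsSymm) :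
    ∃ σ : ℝ, 0 ≤ σ ∧ ∃ v : EuclideanSpace ℂ ι, ‖v‖ = 1 ∧ A *ᵥ star ⇑v = σ • ⇑v := by
  obtain ⟨i⟩ := ‹Nonempty ι›
  have hH := posSemidef_self_mul_conjTranspose A
  set w := hH.isHermitian.eigenvectorBasis i
  set μ := hH.isHermitian.eigenvalues i
  have hw : (A * Aᴴ) *ᵥ ⇑w = μ • ⇑w := hH.isHermitian.mulVec_eigenvectorBasis i
  set σ := √μ
  have hσ : σ * σ = μ := Real.mul_self_sqrt (hH.eigenvalues_nonneg i)
  refine ⟨σ, Real.sqrt_nonneg μ, ?_⟩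
  suffices ∃ u : ι → ℂ, u ≠ 0 ∧ A *ᵥ star u = σ • u by
    obtain ⟨u, hu, hAu⟩ := this
    have hx : WithLp.toLp 2 u ≠ 0 := by simpa using hu
    refine ⟨(‖WithLp.toLp 2 u‖⁻¹ : ℝ) • WithLp.toLp 2 u, ?_, ?_⟩
    · rw [norm_smul, Real.norm_of_nonneg (by positivity),
        inv_mul_cancel₀ (norm_ne_zero_iff.mpr hx)]
    · simp only [WithLp.ofLp_smul, star_smul, star_trivial, mulVec_smul, hAu, smul_comm σ]
  by_cases h : A *ᵥ star ⇑w + σ • ⇑w = 0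
  · have hw0 : (⇑w : ι → ℂ) ≠ 0 := by
      simpa using hH.isHermitian.eigenvectorBasis.orthonormal.ne_zero i
    refine ⟨Complex.I • ⇑w, smul_ne_zero Complex.I_ne_zero hw0, ?_⟩
    rw [add_eq_zero_iff_eq_neg] at h
    rw [star_smul, mulVec_smul, h, Complex.star_def, Complex.conj_I, smul_neg, neg_smul, neg_neg,
      smul_comm]
  · refine ⟨_, h, ?_⟩
    rw [star_add, hA.star_mulVec, star_star, star_smul, star_trivial, mulVec_add, mulVec_mulVec,
      hw, mulVec_smul, ← hσ, smul_add, mul_smul, add_comm]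

theorem exists_mem_unitaryGroup_col_eq {𝕜 : Type*} [RCLike 𝕜] [Fintype ι] [DecidableEq ι]
    {v : EuclideanSpace 𝕜 ι} (hv : ‖v‖ = 1) (i : ι) :
    ∃ U ∈ unitaryGroup ι 𝕜, U.col i = ⇑v := by
  have hvi : Orthonormal 𝕜 (({i} : Set ι).domRestrict fun _ => v) := by
    rw [orthonormal_iff_ite]
    rintro ⟨j, rfl⟩ ⟨k, rfl⟩
    simp [Set.domRestrict_apply, inner_self_eq_norm_sq_to_K, hv]
  obtain ⟨b, hb⟩ := hvi.exists_orthonormalBasis_extension_of_card_eq (by simp)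
  refine ⟨_, (EuclideanSpace.basisFun ι 𝕜).toMatrix_orthonormalBasis_mem_unitary b, ?_⟩
  ext k
  simp [Module.Basis.toMatrix_apply, hb i rfl]

theorem col_star_mul_mul_transpose_star {α : Type*} [CommRing α] [StarRing α] [Fintype ι]
    [DecidableEq ι] {A U : Matrix ι ι α} (hU : U ∈ unitaryGroup ι α) {i : ι} {c : α}
    (h : A *ᵥ star (U.col i) = c • U.col i) :
    (star U * A * (star U)ᵀ).col i = Pi.single i c := by
  have hcol : (star U)ᵀ *ᵥ Pi.single i 1 = star (U.col i) := by
    rw [mulVec_single_one]; rfl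
  rw [← mulVec_single_one, ← mulVec_mulVec, hcol, ← mulVec_mulVec, h, mulVec_smul,
    ← mulVec_single_one, mulVec_mulVec, mem_unitaryGroup_iff'.mp hU, one_mulVec]
  ext j
  simp [Pi.single_apply]

theorem IsSymm.hasTakagiFactorization_of_col_eq_single [Fintype ι] [DecidableEq ι]
    {C : Matrix ι ι ℂ} (hC : C.IsSymm) {i : ι} {σ : ℝ} (hσ : 0 ≤ σ)
    (hCi : C.col i = Pi.single i (σ : ℂ))
    (h : (C.submatrix ((↑) : {j // j ≠ i} → ι) (↑)).HasTakagiFactorization) :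
    C.HasTakagiFactorization := by
  let e := Equiv.sumCompl (· = i)
  have hblocks : C.submatrix e e =
      Matrix.fromBlocks (diagonal fun _ => (σ : ℂ)) 0 0 (C.submatrix (↑) (↑)) := by
    have hcol : ∀ j, C j i = (Pi.single i (σ : ℂ) : ι → ℂ) j := fun j => congrFun hCi j
    have hrow : ∀ j, C i j = (Pi.single i (σ : ℂ) : ι → ℂ) j := fun j =>
      (hC.apply j i).trans (hcol j)
    ext (⟨j, rfl⟩ | ⟨j, hj⟩) (⟨k, hk⟩ | ⟨k, hk⟩)
    · subst hk; simp [e, hcol]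
    · simp [e, hrow, hk]
    · subst hk; simp [e, hcol, hj]
    · rfl
  have := ((hasTakagiFactorization_diagonal fun _ => hσ).fromBlocks h).submatrix_equiv e.symm
  rwa [← hblocks, submatrix_submatrix, e.self_comp_symm, submatrix_id_id] at this

theorem IsSymm.hasTakagiFactorization [Fintype ι] [DecidableEq ι] {A : Matrix ι ι ℂ}
    (hA : A.IsSymm) : A.HasTakagiFactorization := by
  induction hn : Fintype.card ι generalizing ι with
  | zero =>
    have := Fintype.card_eq_zero_iff.mp hn
    exact ⟨1, one_mem _, 0, le_rfl, Subsingleton.elim _ _⟩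
  | succ m ih =>
    have : Nonempty ι := Fintype.card_pos_iff.mp (by omega)
    obtain ⟨σ, hσ, v, hv, hAv⟩ := hA.exists_mulVec_star_eq_smul
    obtain ⟨i⟩ := this
    obtain ⟨U, hU, hUi⟩ := exists_mem_unitaryGroup_col_eq hv i
    have hCi := col_star_mul_mul_transpose_star hU (c := (σ : ℂ))
      (by rw [hUi, hAv, Complex.coe_smul])
    have hC := hA.mul_mul_transpose (star U)
    have hC' := ih (hC.submatrix ((↑) : {j // j ≠ i} → ι))
      (by simp [Fintype.card_subtype_compl, hn])
    have hUU := mem_unitaryGroup_iff.mp hU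
    have hA' : A = U * (star U * A * (star U)ᵀ) * Uᵀ := by
      rw [← Matrix.mul_assoc, ← Matrix.mul_assoc, hUU, Matrix.one_mul, Matrix.mul_assoc,
        ← transpose_mul, hUU, transpose_one, Matrix.mul_one]
    rw [hA']
    exact (hC.hasTakagiFactorization_of_col_eq_single hσ hCi hC').mul_mul_transpose hU

theorem HasTakagiFactorization.exists_map_star_mul_mul_inv_eq_diagonal [Fintype ι]
    [DecidableEq ι] {A : Matrix ι ι ℂ} (h : A.HasTakagiFactorization) :
    ∃ V ∈ unitaryGroup ι ℂ, ∃ d : ι → ℝ, 0 ≤ d ∧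
      V.map star * A * V⁻¹ = diagonal fun i => (d i : ℂ) := by
  obtain ⟨U, hU, d, hd, rfl⟩ := h
  have hUU := mem_unitaryGroup_iff.mp hU
  have hUU' := mem_unitaryGroup_iff'.mp hU
  have hinv : (Uᵀ)⁻¹ = (star U)ᵀ :=
    inv_eq_right_inv (by rw [← transpose_mul, hUU', transpose_one])
  refine ⟨Uᵀ, transpose_mem_unitaryGroup_iff.mpr hU, d, hd, ?_⟩
  rw [hinv, show Uᵀ.map star = star U from rfl]
  simp only [Matrix.mul_assoc]
  rw [← transpose_mul, hUU', transpose_one, Matrix.mul_one, ← Matrix.mul_assoc, hUU',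
    Matrix.one_mul]

end Matrix

theorem stmt10_general (r : ℕ) (B P : Matrix (Fin r) (Fin r) ℂ)
    (hsym : (P.map (starRingEnd ℂ) * B * P⁻¹)ᵀ = P.map (starRingEnd ℂ) * B * P⁻¹) :
    ∃ U : Matrix (Fin r) (Fin r) ℂ, U ∈ Matrix.unitaryGroup (Fin r) ℂ ∧
      (∀ i j, i ≠ j →
        (U.map (starRingEnd ℂ) * (P.map (starRingEnd ℂ) * B * P⁻¹) * U⁻¹) i j = 0) ∧
      (∀ i, ∃ c : ℝ, 0 ≤ c ∧
        (U.map (starRingEnd ℂ) * (P.map (starRingEnd ℂ) * B * P⁻¹) * U⁻¹) i i = (c : ℂ)) := by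
  obtain ⟨U, hU, d, hd, hdiag⟩ :=
    (IsSymm.hasTakagiFactorization hsym).exists_map_star_mul_mul_inv_eq_diagonal
  refine ⟨U, hU, fun i j hij => ?_, fun i => ⟨d i, hd i, ?_⟩⟩
  · exact (congrFun₂ hdiag i j).trans (diagonal_apply_ne _ hij)
  · exact (congrFun₂ hdiag i i).trans (diagonal_apply_eq _ i)

/-- Let `Q̂` be a positive definite Hermitian matrix and `B` such that, in a basis `P`
in which `Q̂` becomes the identity (`P Q̂ P* = 1`), the transformed matrix
`conj(P) B P⁻¹` is complex symmetric. Then there is a unitary `U` such that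
`conj(U) (conj(P) B P⁻¹) U⁻¹` is diagonal with nonnegative real entries. -/
theorem stmt10 (r : ℕ) (Qhat B P : Matrix (Fin r) (Fin r) ℂ)
    (hQ : Qhat.PosDef)
    (hP : P * Qhat * Pᴴ = 1)
    (hsym : (P.map (starRingEnd ℂ) * B * P⁻¹)ᵀ = P.map (starRingEnd ℂ) * B * P⁻¹) :
    ∃ U : Matrix (Fin r) (Fin r) ℂ, U ∈ Matrix.unitaryGroup (Fin r) ℂ ∧
      (∀ i j, i ≠ j →
        (U.map (starRingEnd ℂ) * (P.map (starRingEnd ℂ) * B * P⁻¹) * U⁻¹) i j = 0) ∧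
      (∀ i, ∃ c : ℝ, 0 ≤ c ∧
        (U.map (starRingEnd ℂ) * (P.map (starRingEnd ℂ) * B * P⁻¹) * U⁻¹) i i = (c : ℂ)) :=
  stmt10_general r B P hsym
end
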